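/- Let δ > 0, γ > 0 and, for 0 < |x| < γ, let y(x) be the unique fixed point of y ↦ P(x,y) in I₋₁(x) ∪ I₁(x) (as provided by Proposition 2.7). Then x/y(x)³ → −α/β as x → 0 (x ≠ 0); in particular, for all sufficiently small |x| > 0 one has y(x) ∈ I_{sign(−αβx)}(x), i.e. the sign of y(x) equals the sign of −αβx. -/

import Mathlib

/-
Multiplied by `y`, the fixed-point equation `P(x, y) = y` reads `α y³ + β x + y R(x, y) = 0`. The bounds
on `R_y` (integrated from `y → 0` along `x = 0`) and on `R_x` (integrated horizontally) give
`R(x, y) = o(y²)` on `|x| ≤ m' |y|³` for every `m' < m`. Since `|α| / |β| < m'`, the intermediate value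
theorem then produces, for small `x`, a fixed point `y` with `|x| ≤ m' |y|³` and `|y|` small; by
uniqueness it is `y(x)`. Dividing the equation by `β y(x)³` gives `x / y(x)³ → -α/β`, and the sign of
`y(x)` is read off from the sign of this limit.
-/

open Set Filter Topology

/-- Partial derivative in the first variable. -/
noncomputable def pdx (f : ℝ → ℝ → ℝ) (a b : ℝ) : ℝ := deriv (fun x => f x b) a

/-- Partial derivative in the second variable. -/
noncomputable def pdy (f : ℝ → ℝ → ℝ) (a b : ℝ) : ℝ := deriv (fun y => f a y) b

/-- Real cube root (for nonnegative arguments). -/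
noncomputable def cbrt (s : ℝ) : ℝ := s ^ ((1 : ℝ) / 3)

lemma cbrt_nonneg {u : ℝ} (hu : 0 ≤ u) : 0 ≤ cbrt u := Real.rpow_nonneg hu _

lemma cbrt_pos {u : ℝ} (hu : 0 < u) : 0 < cbrt u := Real.rpow_pos_of_pos hu _

lemma cbrt_pow_three {u : ℝ} (hu : 0 ≤ u) : cbrt u ^ 3 = u := by
  simpa [cbrt, one_div] using Real.rpow_inv_natCast_pow hu (n := 3) (by norm_num)

lemma cbrt_le_iff_le_pow {u t : ℝ} (hu : 0 ≤ u) (ht : 0 ≤ t) : cbrt u ≤ t ↔ u ≤ t ^ 3 := by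
  rw [← pow_le_pow_iff_left₀ (cbrt_nonneg hu) ht (by norm_num : 3 ≠ 0), cbrt_pow_three hu]

lemma cbrt_lt_iff_lt_pow {u t : ℝ} (hu : 0 ≤ u) (ht : 0 ≤ t) : cbrt u < t ↔ u < t ^ 3 := by
  rw [← pow_lt_pow_iff_left₀ (cbrt_nonneg hu) ht (by norm_num : 3 ≠ 0), cbrt_pow_three hu]

lemma continuous_cbrt : Continuous cbrt := Real.continuous_rpow_const (by norm_num)

lemma mem_union_Icc_of_le_abs {y e δ : ℝ} (hey : e ≤ |y|) (hyδ : |y| ≤ δ) :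
    y ∈ Icc (-δ) (-e) ∪ Icc e δ := by
  rcases le_or_gt 0 y with hy | hy
  · rw [abs_of_nonneg hy] at hey hyδ
    exact Or.inr ⟨hey, hyδ⟩
  · rw [abs_of_neg hy] at hey hyδ
    exact Or.inl ⟨by linarith, by linarith⟩

lemma eventually_nhdsNE_zero_iff {p : ℝ → Prop} :
    (∀ᶠ x in 𝓝[≠] (0 : ℝ), p x) ↔ ∃ γ > 0, ∀ x : ℝ, 0 < |x| → |x| < γ → p x := by
  simp only [Filter.Eventually, Metric.mem_nhdsWithin_iff, subset_def, mem_inter_iff,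
    Metric.mem_ball, Real.dist_eq, sub_zero, mem_compl_singleton_iff, mem_ofPred_eq, abs_pos]
  exact exists_congr fun γ => and_congr_right fun _ => ⟨fun h x hx hxγ => h x ⟨hxγ, hx⟩,
    fun h x hx => h x hx.2 hx.1⟩

section PartialDerivatives

variable {f : ℝ → ℝ → ℝ} {a b : ℝ}

lemma hasDerivAt_pdx (hf : DifferentiableAt ℝ (fun p : ℝ × ℝ => f p.1 p.2) (a, b)) :
    HasDerivAt (fun x => f x b) (pdx f a b) a :=
  (hf.comp (f := fun x : ℝ => (x, b)) a (by fun_prop)).hasDerivAt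

lemma hasDerivAt_pdy (hf : DifferentiableAt ℝ (fun p : ℝ × ℝ => f p.1 p.2) (a, b)) :
    HasDerivAt (fun y => f a y) (pdy f a b) b :=
  (hf.comp (f := fun y : ℝ => (a, y)) b (by fun_prop)).hasDerivAt

end PartialDerivatives

lemma abs_le_mul_sq_of_abs_deriv_le {f f' : ℝ → ℝ} {ε δ : ℝ}
    (hf : Tendsto f (𝓝[≠] 0) (𝓝 0))
    (hderiv : ∀ t, 0 < |t| → |t| ≤ δ → HasDerivAt f (f' t) t)
    (hbound : ∀ t, 0 < |t| → |t| ≤ δ → |f' t| ≤ ε * |t|)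
    {y : ℝ} (hy : 0 < |y|) (hyδ : |y| ≤ δ) : |f y| ≤ ε * y ^ 2 := by
  have hy0 : y ≠ 0 := abs_pos.mp hy
  have hscale : Tendsto (fun s : ℝ => s * y) (𝓝[>] 0) (𝓝[≠] 0) := by
    refine tendsto_nhdsWithin_of_tendsto_nhds_of_eventually_within _ ?_ ?_
    · exact ((continuous_mul_const y).tendsto' 0 0 (zero_mul y)).mono_left nhdsWithin_le_nhds
    · filter_upwards [self_mem_nhdsWithin] with s hs
      exact mul_ne_zero (ne_of_gt hs) hy0
  have hlim : Tendsto (fun s => |f y - f (s * y)|) (𝓝[>] 0) (𝓝 |f y - 0|) :=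
    (tendsto_const_nhds.sub (hf.comp hscale)).abs
  rw [sub_zero] at hlim
  refine le_of_tendsto hlim ?_
  filter_upwards [Ioo_mem_nhdsGT (zero_lt_one' ℝ)] with s ⟨hs0, hs1⟩
  have hε : 0 ≤ ε := nonneg_of_mul_nonneg_left ((abs_nonneg _).trans (hbound y hy hyδ)) hy
  have hmem : ∀ r ∈ Icc s 1, 0 < |r * y| ∧ |r * y| ≤ |y| := fun r ⟨hsr, hr1⟩ => by
    rw [abs_mul, abs_of_pos (hs0.trans_le hsr)]
    exact ⟨mul_pos (hs0.trans_le hsr) hy, mul_le_of_le_one_left hy.le hr1⟩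
  have hmvt := norm_image_sub_le_of_norm_deriv_le_segment' (f := fun r => f (r * y))
    (f' := fun r => f' (r * y) * y) (C := ε * y ^ 2) (a := s) (b := 1)
    (fun r hr => ?_) (fun r hr => ?_) 1 ⟨hs1.le, le_rfl⟩
  · calc |f y - f (s * y)| ≤ ε * y ^ 2 * (1 - s) := by simpa using hmvt
      _ ≤ ε * y ^ 2 := mul_le_of_le_one_right (by positivity) (by linarith)
  · obtain ⟨hr0, hry⟩ := hmem r hr
    have := (hderiv _ hr0 (hry.trans hyδ)).comp r ((hasDerivAt_id r).mul_const y)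
    rw [one_mul] at this
    exact this.hasDerivWithinAt
  · obtain ⟨hr0, hry⟩ := hmem r (Ico_subset_Icc_self hr)
    rw [Real.norm_eq_abs, abs_mul, ← sq_abs y, sq]
    exact mul_le_mul_of_nonneg_right ((hbound _ hr0 (hry.trans hyδ)).trans
      (mul_le_mul_of_nonneg_left hry hε)) (abs_nonneg y) |>.trans_eq (by ring)

section Remainder

variable {m : ℝ} {R : ℝ → ℝ → ℝ} (hm : 0 < m)
  (hdiff : ∀ x y, |x| < m * |y| ^ 3 → DifferentiableAt ℝ (fun p : ℝ × ℝ => R p.1 p.2) (x, y))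
  (hRlim : ∀ ε > (0 : ℝ), ∃ δ > (0 : ℝ), ∀ x y : ℝ,
      0 < |y| → |y| ≤ δ → |x| ≤ m * |y| ^ 3 →
      |R x y| ≤ ε ∧ |pdy R x y / y| ≤ ε ∧ |pdx R x y * y| ≤ ε)
include hm hdiff hRlim

lemma abs_remainder_zero_le :
    ∀ ε > (0 : ℝ), ∃ δ > (0 : ℝ), ∀ y, 0 < |y| → |y| ≤ δ → |R 0 y| ≤ ε * y ^ 2 := by
  have hregion : ∀ y, 0 < |y| → |(0 : ℝ)| < m * |y| ^ 3 := fun y hy => by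
    rw [abs_zero]; positivity
  intro ε hε
  obtain ⟨δ, hδ, hbound⟩ := hRlim ε hε
  refine ⟨δ, hδ, fun y hy hyδ => abs_le_mul_sq_of_abs_deriv_le (f' := pdy R 0) ?_
    (fun t ht _ => hasDerivAt_pdy (hdiff 0 t (hregion t ht))) (fun t ht htδ => ?_) hy hyδ⟩
  · refine Metric.tendsto_nhds.2 fun η hη => eventually_nhdsNE_zero_iff.2 ?_
    obtain ⟨ρ, hρ, hsmall⟩ := hRlim (η / 2) (half_pos hη)
    refine ⟨ρ, hρ, fun y hy hyρ => ?_⟩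
    rw [Real.dist_eq, sub_zero]
    exact (hsmall 0 y hy hyρ.le (hregion y hy).le).1.trans_lt (half_lt_self hη)
  · have := (hbound 0 t ht htδ (hregion t ht).le).2.1
    rwa [abs_div, div_le_iff₀ ht] at this

lemma abs_remainder_le {m' : ℝ} (hm' : m' < m) :
    ∀ ε > (0 : ℝ), ∃ δ > (0 : ℝ), ∀ x y, 0 < |y| → |y| ≤ δ → |x| ≤ m' * |y| ^ 3 →
      |R x y| ≤ ε * y ^ 2 := by
  intro ε hε
  set ε₁ := ε / (1 + m)
  have hε₁ : 0 < ε₁ := by positivity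
  obtain ⟨δ₁, hδ₁, hbound⟩ := hRlim ε₁ hε₁
  obtain ⟨δ₀, hδ₀, hzero⟩ := abs_remainder_zero_le hm hdiff hRlim ε₁ hε₁
  refine ⟨min δ₁ δ₀, lt_min hδ₁ hδ₀, fun x y hy hyδ hxy => ?_⟩
  have hmy : m' * |y| ^ 3 < m * |y| ^ 3 := by gcongr
  have hrx : ∀ r ∈ Icc (0 : ℝ) 1, |r * x| ≤ |x| := fun r ⟨hr0, hr1⟩ => by
    rw [abs_mul, abs_of_nonneg hr0]
    exact mul_le_of_le_one_left (abs_nonneg x) hr1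
  have hmvt := norm_image_sub_le_of_norm_deriv_le_segment_01' (f := fun r => R (r * x) y)
    (f' := fun r => pdx R (r * x) y * x) (C := ε₁ * m * y ^ 2) (fun r hr => ?_) (fun r hr => ?_)
  · simp only [one_mul, zero_mul, Real.norm_eq_abs] at hmvt
    calc |R x y| ≤ |R 0 y| + |R x y - R 0 y| := norm_le_norm_add_norm_sub' (R x y) (R 0 y)
      _ ≤ ε₁ * y ^ 2 + ε₁ * m * y ^ 2 := add_le_add (hzero y hy (hyδ.trans (min_le_right _ _))) hmvt
      _ = ε * y ^ 2 := by simp only [ε₁]; field_simp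
  · have := (hasDerivAt_pdx (hdiff _ y (((hrx r hr).trans hxy).trans_lt hmy))).comp r
      ((hasDerivAt_id r).mul_const x)
    rw [one_mul] at this
    exact this.hasDerivWithinAt
  · have hrxy := (hbound (r * x) y hy (hyδ.trans (min_le_left _ _))
      (((hrx r (Ico_subset_Icc_self hr)).trans hxy).trans hmy.le)).2.2
    refine le_of_mul_le_mul_right ?_ hy
    calc ‖pdx R (r * x) y * x‖ * |y| = |pdx R (r * x) y * y| * |x| := by
          rw [Real.norm_eq_abs, abs_mul, abs_mul]; ring
      _ ≤ ε₁ * (m * |y| ^ 3) := mul_le_mul hrxy (hxy.trans hmy.le) (abs_nonneg x) hε₁.le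
      _ = ε₁ * m * y ^ 2 * |y| := by rw [pow_succ, sq_abs]; ring

end Remainder

lemma tendsto_remainder_div_sq {m' : ℝ} {R : ℝ → ℝ → ℝ} {l : Filter ℝ} {y : ℝ → ℝ}
    (hR : ∀ ε > (0 : ℝ), ∃ δ > (0 : ℝ), ∀ x y, 0 < |y| → |y| ≤ δ → |x| ≤ m' * |y| ^ 3 →
      |R x y| ≤ ε * y ^ 2)
    (hy : ∀ ρ > 0, ∀ᶠ x in l, 0 < |y x| ∧ |y x| ≤ ρ ∧ |x| ≤ m' * |y x| ^ 3) :
    Tendsto (fun x => R x (y x) / y x ^ 2) l (𝓝 0) := by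
  refine Metric.tendsto_nhds.2 fun ε hε => ?_
  obtain ⟨ρ, hρ, hsmall⟩ := hR (ε / 2) (half_pos hε)
  filter_upwards [hy ρ hρ] with x ⟨hy0, hyρ, hxy⟩
  have hy2 : 0 < y x ^ 2 := by rw [← sq_abs]; positivity
  rw [Real.dist_eq, sub_zero, abs_div, abs_of_pos hy2, div_lt_iff₀ hy2]
  exact (hsmall x _ hy0 hyρ hxy).trans_lt (mul_lt_mul_of_pos_right (half_lt_self hε) hy2)

lemma exists_mem_Icc_cubic_add_eq_zero {α q ε a b : ℝ} {r : ℝ → ℝ} (hab : a ≤ b)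
    (hq : α * q < 0) (hr : ContinuousOn r (Icc a b)) (hbound : ∀ t ∈ Icc a b, |r t| ≤ ε * t ^ 3)
    (hqa : (|α| + ε) * a ^ 3 ≤ |q|) (hqb : |q| ≤ (|α| - ε) * b ^ 3) :
    ∃ t ∈ Icc a b, α * t ^ 3 + q + r t = 0 := by
  have hα : α ≠ 0 := by rintro rfl; simp at hq
  set g := fun t => α * (α * t ^ 3 + q + r t)
  have hg : ∀ t, g t = |α| * (|α| * t ^ 3 - |q|) + α * r t := fun t => by
    have hαq : α * q = -(|α| * |q|) := by rw [← abs_mul, abs_of_neg hq, neg_neg]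
    simp only [g]
    linear_combination hαq - t ^ 3 * abs_mul_abs_self α
  have hαr : ∀ t ∈ Icc a b, |α * r t| ≤ |α| * (ε * t ^ 3) := fun t ht => by
    rw [abs_mul]; exact mul_le_mul_of_nonneg_left (hbound t ht) (abs_nonneg α)
  have hga : g a ≤ 0 := by
    rw [hg]
    linarith [le_abs_self (α * r a), hαr a ⟨le_rfl, hab⟩, mul_le_mul_of_nonneg_left hqa (abs_nonneg α)]
  have hgb : 0 ≤ g b := by
    rw [hg]
    linarith [neg_abs_le (α * r b), hαr b ⟨hab, le_rfl⟩, mul_le_mul_of_nonneg_left hqb (abs_nonneg α)]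
  obtain ⟨t, ht, hgt⟩ := intermediate_value_Icc hab (by fun_prop) ⟨hga, hgb⟩
  exact ⟨t, ht, (mul_eq_zero.1 hgt).resolve_left hα⟩

section FixedPoint

variable {α β : ℝ} {R P : ℝ → ℝ → ℝ}
  (hP : ∀ x y : ℝ, y ≠ 0 → P x y = y + α * y ^ 2 + β * x / y + R x y)
include hP

lemma fixedPoint_iff {x y : ℝ} (hy : y ≠ 0) :
    P x y = y ↔ α * y ^ 3 + β * x + y * R x y = 0 := by
  have hfactor : α * y ^ 3 + β * x + y * R x y = y * (α * y ^ 2 + β * x / y + R x y) := by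
    field_simp
  rw [hP x y hy, hfactor, mul_eq_zero, or_iff_right hy]
  constructor <;> intro h <;> linarith

lemma tendsto_div_pow_three {l : Filter ℝ} {y : ℝ → ℝ} (hβ : β ≠ 0)
    (hfix : ∀ᶠ x in l, y x ≠ 0 ∧ P x (y x) = y x)
    (hR : Tendsto (fun x => R x (y x) / y x ^ 2) l (𝓝 0)) :
    Tendsto (fun x => x / y x ^ 3) l (𝓝 (-(α / β))) := by
  have hlim := (hR.div_const β).neg.sub_const (α / β)
  rw [zero_div, neg_zero, zero_sub] at hlim
  refine hlim.congr' ?_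
  filter_upwards [hfix] with x ⟨hy, hPy⟩
  have h := (fixedPoint_iff hP hy).1 hPy
  field_simp
  linear_combination -h

section Existence

variable {m m' : ℝ} (hα : α ≠ 0) (hβ : β ≠ 0) (hm' : |α| / |β| < m') (hm'm : m' < m)
  (hcont : ∀ x y, |x| < m * |y| ^ 3 → ContinuousAt (R x) y)
  (hR : ∀ ε > (0 : ℝ), ∃ δ > (0 : ℝ), ∀ x y, 0 < |y| → |y| ≤ δ → |x| ≤ m' * |y| ^ 3 →
    |R x y| ≤ ε * y ^ 2)
include hα hβ hm' hm'm hcont hR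

lemma eventually_exists_fixedPoint {ρ : ℝ} (hρ : 0 < ρ) :
    ∀ᶠ x in 𝓝[≠] 0, ∃ y, P x y = y ∧ |x| ≤ m' * |y| ^ 3 ∧ |y| ≤ ρ := by
  have hαpos : 0 < |α| := abs_pos.2 hα
  have hβpos : 0 < |β| := abs_pos.2 hβ
  have hm'pos : 0 < m' := (by positivity : 0 < |α| / |β|).trans hm'
  rw [div_lt_iff₀ hβpos] at hm'
  set ε := min (|α| / 2) (m' * |β| - |α|)
  have hε : 0 < ε := lt_min (by positivity) (by linarith)
  obtain ⟨δ, hδ, hsmall⟩ := hR ε hε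
  set b := min ρ δ
  have hb : 0 < b := lt_min hρ hδ
  refine eventually_nhdsNE_zero_iff.2 ⟨|α| * b ^ 3 / (2 * |β|), by positivity, fun x hx hxb => ?_⟩
  rw [lt_div_iff₀ (by positivity)] at hxb
  -- we look for the fixed point as `y = s t` with `t ∈ [a, b]`, `a³ = |x| / m'`
  obtain ⟨s, hs, hsx⟩ : ∃ s : ℝ, |s| = 1 ∧ α * (s * (β * x)) < 0 := by
    have hαβx : α * (β * x) ≠ 0 := mul_ne_zero hα (mul_ne_zero hβ (abs_pos.1 hx))
    rcases hαβx.lt_or_gt with h | h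
    · exact ⟨1, abs_one, by linarith⟩
    · exact ⟨-1, by norm_num, by linarith⟩
  have hs2 : s ^ 2 = 1 := by rw [← sq_abs, hs, one_pow]
  have hsβx : |s * (β * x)| = |β| * |x| := by rw [abs_mul, hs, one_mul, abs_mul]
  set a := cbrt (|x| / m')
  have ha : 0 < a := cbrt_pos (by positivity)
  have ha3 : a ^ 3 * m' = |x| := by rw [cbrt_pow_three (by positivity)]; field_simp
  have hab : a ≤ b := by
    rw [cbrt_le_iff_le_pow (by positivity) hb.le, div_le_iff₀ hm'pos]
    nlinarith [pow_pos hb 3]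
  have hIcc : ∀ t ∈ Icc a b, 0 < t ∧ |s * t| = t ∧ |x| ≤ m' * t ^ 3 := fun t ⟨hat, _⟩ => by
    have ht := ha.trans_le hat
    refine ⟨ht, by rw [abs_mul, hs, one_mul, abs_of_pos ht], ?_⟩
    rw [← ha3, mul_comm]
    gcongr
  have hRt : ∀ t ∈ Icc a b, |t * R x (s * t)| ≤ ε * t ^ 3 := fun t htab => by
    obtain ⟨ht, hst, hxt⟩ := hIcc t htab
    have := hsmall x (s * t) (by rwa [hst]) (by rw [hst]; exact htab.2.trans (min_le_right _ _))
      (by rwa [hst])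
    rw [mul_pow, hs2, one_mul] at this
    rw [abs_mul, abs_of_pos ht]
    nlinarith
  have hRcont : ContinuousOn (fun t => t * R x (s * t)) (Icc a b) := fun t htab => by
    obtain ⟨ht, hst, hxt⟩ := hIcc t htab
    have hxt' : |x| < m * |s * t| ^ 3 := by rw [hst]; nlinarith [pow_pos ht 3]
    exact (continuousAt_id.mul ((hcont x (s * t) hxt').comp
      (continuous_const_mul s).continuousAt)).continuousWithinAt
  have hqa : (|α| + ε) * a ^ 3 ≤ |s * (β * x)| := by
    rw [hsβx, ← ha3]
    nlinarith [mul_le_mul_of_nonneg_right (min_le_right (|α| / 2) (m' * |β| - |α|)) (pow_pos ha 3).le]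
  have hqb : |s * (β * x)| ≤ (|α| - ε) * b ^ 3 := by
    rw [hsβx]
    nlinarith [mul_le_mul_of_nonneg_right (min_le_left (|α| / 2) (m' * |β| - |α|)) (pow_pos hb 3).le]
  obtain ⟨t, htab, hroot⟩ := exists_mem_Icc_cubic_add_eq_zero hab hsx hRcont hRt hqa hqb
  obtain ⟨ht, hst, hxt⟩ := hIcc t htab
  refine ⟨s * t, (fixedPoint_iff hP (by rw [← abs_ne_zero, hst]; exact ht.ne')).2 ?_,
    by rwa [hst], by rw [hst]; exact htab.2.trans (min_le_left _ _)⟩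
  linear_combination s * hroot + (α * s * t ^ 3 - β * x) * hs2

lemma eventually_fixedPoint_small_of_unique {δ : ℝ} (hδ : 0 < δ) {yfix : ℝ → ℝ}
    (huniq : ∀ᶠ x in 𝓝[≠] 0, ∀ z ∈ Icc (-δ) (-(cbrt (|x| / m))) ∪ Icc (cbrt (|x| / m)) δ,
      P x z = z → z = yfix x) :
    ∀ ρ > 0, ∀ᶠ x in 𝓝[≠] 0, 0 < |yfix x| ∧ |yfix x| ≤ ρ ∧ |x| ≤ m' * |yfix x| ^ 3 := by
  have hm0 : 0 < m := lt_of_le_of_lt (by positivity) (hm'.trans hm'm)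
  intro ρ hρ
  filter_upwards [eventually_exists_fixedPoint hP hα hβ hm' hm'm hcont hR (lt_min hρ hδ), huniq,
    self_mem_nhdsWithin] with x ⟨y, hPy, hxy, hyρ⟩ hunique hx
  have hy : 0 < |y| := by
    by_contra! h
    rw [abs_nonpos_iff.1 h, abs_zero, zero_pow three_ne_zero, mul_zero] at hxy
    exact hx (abs_nonpos_iff.1 hxy)
  have hxy' : cbrt (|x| / m) ≤ |y| := by
    rw [cbrt_le_iff_le_pow (by positivity) hy.le, div_le_iff₀' hm0]
    nlinarith [pow_pos hy 3]
  obtain rfl := hunique y (mem_union_Icc_of_le_abs hxy' (hyρ.trans (min_le_right _ _))) hPy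
  exact ⟨hy, hyρ.trans (min_le_left _ _), hxy⟩

end Existence

end FixedPoint

lemma eventually_pos_mul_pow_three {α β : ℝ} {l : Filter ℝ} {y : ℝ → ℝ} (hα : α ≠ 0)
    (hβ : β ≠ 0) (hlim : Tendsto (fun x => x / y x ^ 3) l (𝓝 (-(α / β))))
    (hy : ∀ᶠ x in l, y x ≠ 0) :
    ∀ᶠ x in l, 0 < -(α * β * x) * y x ^ 3 := by
  have hprod := (hlim.mul_const (-(α / β))).eventually
    (lt_mem_nhds (mul_self_pos.2 (neg_ne_zero.2 (div_ne_zero hα hβ))))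
  filter_upwards [hprod, hy] with x hq hy
  have hw : -(α * β * x) * y x ^ 3 = β ^ 2 * (x / y x ^ 3 * -(α / β)) * (y x ^ 3) ^ 2 := by
    field_simp
  rw [hw]
  have := pow_ne_zero 3 hy
  positivity

lemma mem_Icc_of_mul_pow_three_pos {y e δ w : ℝ} (he : 0 ≤ e) (h : y ∈ Icc (-δ) (-e) ∪ Icc e δ)
    (hw : 0 < w * y ^ 3) : (0 < w → y ∈ Icc e δ) ∧ (w < 0 → y ∈ Icc (-δ) (-e)) := by
  rcases h with h | h
  · have hy : y ^ 3 ≤ 0 := Odd.pow_nonpos (by decide) (by linarith [h.2])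
    exact ⟨fun hw' => absurd hw (not_lt.2 (mul_nonpos_of_nonneg_of_nonpos hw'.le hy)), fun _ => h⟩
  · have hy : 0 ≤ y ^ 3 := pow_nonneg (by linarith [h.1]) 3
    exact ⟨fun _ => h, fun hw' => absurd hw (not_lt.2 (mul_nonpos_of_nonpos_of_nonneg hw'.le hy))⟩

lemma differentiableAt_of_lt_mul_pow_three {m : ℝ} {R : ℝ → ℝ → ℝ} {n : WithTop ℕ∞} (hn : n ≠ 0)
    (hm : 0 < m) (hR : ContDiffOn ℝ n (fun p : ℝ × ℝ => R p.1 p.2) {p | cbrt (|p.1| / m) < |p.2|})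
    {x y : ℝ} (h : |x| < m * |y| ^ 3) :
    DifferentiableAt ℝ (fun p : ℝ × ℝ => R p.1 p.2) (x, y) := by
  have hopen : IsOpen {p : ℝ × ℝ | cbrt (|p.1| / m) < |p.2|} :=
    isOpen_lt (continuous_cbrt.comp (continuous_fst.abs.div_const m)) continuous_snd.abs
  have hmem : (x, y) ∈ {p : ℝ × ℝ | cbrt (|p.1| / m) < |p.2|} :=
    (cbrt_lt_iff_lt_pow (by positivity) (abs_nonneg y)).2 ((div_lt_iff₀' hm).2 h)
  exact (hR.contDiffAt (hopen.mem_nhds hmem)).differentiableAt hn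

/-- Proposition 2.7, asymptotics of the fixed point: `x / y(x)³ → -α/β` as `x → 0`;
in particular `y(x) ∈ I_{sign(-αβx)}(x)` for small `|x| > 0`. -/
theorem stmt_11
    (α β m : ℝ) (hαβ : α * β ≠ 0) (hm : |α| / |β| < m)
    (R : ℝ → ℝ → ℝ)
    (hRC2 : ContDiffOn ℝ 2 (fun p : ℝ × ℝ => R p.1 p.2)
      {p : ℝ × ℝ | cbrt (|p.1| / m) < |p.2|})
    (hRlim : ∀ ε > (0 : ℝ), ∃ δ > (0 : ℝ), ∀ x y : ℝ,
      0 < |y| → |y| ≤ δ → |x| ≤ m * |y| ^ 3 →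
      |R x y| ≤ ε ∧ |pdy R x y / y| ≤ ε ∧ |pdx R x y * y| ≤ ε)
    (P : ℝ → ℝ → ℝ)
    (hP : ∀ x y : ℝ, y ≠ 0 → P x y = y + α * y ^ 2 + β * x / y + R x y)
    -- the fixed point provided by Proposition 2.7
    (δ γ : ℝ) (hδ : 0 < δ) (hγ : 0 < γ) (yfix : ℝ → ℝ)
    (hyfix : ∀ x : ℝ, 0 < |x| → |x| < γ →
      (yfix x ∈ Icc (-δ) (-(cbrt (|x| / m))) ∪ Icc (cbrt (|x| / m)) δ) ∧
      P x (yfix x) = yfix x ∧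
      (∀ z ∈ Icc (-δ) (-(cbrt (|x| / m))) ∪ Icc (cbrt (|x| / m)) δ,
        P x z = z → z = yfix x)) :
    Tendsto (fun x : ℝ => x / (yfix x) ^ 3) (nhdsWithin 0 {(0 : ℝ)}ᶜ)
      (nhds (-(α / β))) ∧
    ∃ γ' > (0 : ℝ), ∀ x : ℝ, 0 < |x| → |x| < γ' →
      (0 < -(α * β * x) → yfix x ∈ Icc (cbrt (|x| / m)) δ) ∧
      (-(α * β * x) < 0 → yfix x ∈ Icc (-δ) (-(cbrt (|x| / m)))) := by
  have hα : α ≠ 0 := left_ne_zero_of_mul hαβ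
  have hβ : β ≠ 0 := right_ne_zero_of_mul hαβ
  have hm0 : 0 < m := lt_of_le_of_lt (by positivity) hm
  obtain ⟨m', hm', hm'm⟩ := exists_between hm
  have hdiff := fun x y => differentiableAt_of_lt_mul_pow_three two_ne_zero hm0 hRC2 (x := x) (y := y)
  have hR := abs_remainder_le hm0 hdiff hRlim hm'm
  have hfix := eventually_nhdsNE_zero_iff.2 ⟨γ, hγ, hyfix⟩
  have hsmall := eventually_fixedPoint_small_of_unique hP hα hβ hm' hm'm
    (fun x y h => (hasDerivAt_pdy (hdiff x y h)).continuousAt) hR hδ (hfix.mono fun _ h => h.2.2)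
  have hy0 := (hsmall 1 one_pos).mono fun _ h => abs_pos.1 h.1
  have hlim := tendsto_div_pow_three hP hβ (hy0.and (hfix.mono fun _ h => h.2.1))
    (tendsto_remainder_div_sq hR hsmall)
  refine ⟨hlim, eventually_nhdsNE_zero_iff.1 ?_⟩
  filter_upwards [eventually_pos_mul_pow_three hα hβ hlim hy0, hfix] with x hw ⟨hmem, _, _⟩
  exact mem_Icc_of_mul_pow_three_pos (cbrt_nonneg (by positivity)) hmem hw
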